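/- arXiv:1601.07466 — 2 statements merged into one kernel-verified Lean document; each statement's English description precedes it below -/
import Mathlib

section
/- Let F : P → ℂ be arbitrary and define f(λ) := ∑_{δ|λ} F(δ)·μ(λ/δ). Then the q-bracket of F is given explicitly by ⟨F⟩_q = ∑_{λ∈P} f(λ) q^{|λ|}; equivalently, for every integer n ≥ 0, ∑_{λ⊢n} F(λ) = ∑_{k=0}^{n} (∑_{δ⊢k} f(δ)) · p(n−k). -/
/-
Möbius inversion on the lattice of sub-multisets: the square-free sub-multisets of `m` are the
subsets of its support, so `∑_{γ ≤ m} μ(γ)` vanishes unless `m = ∅`, and hence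
`F(λ) = ∑_{δ | λ} f(δ)`. Summing over `λ ⊢ n` and splitting `λ = δ + ε` with `δ ⊢ k`,
`ε ⊢ n - k` turns the right-hand side into the convolution of `k ↦ ∑_{δ ⊢ k} f(δ)` with `p`.
-/

/-- The set of partition divisors (sub-partitions) of `l`. -/
def pdivisors (l : Multiset ℕ+) : Finset (Multiset ℕ+) := l.powerset.toFinset

/-- Partition-theoretic Möbius function. -/
def pmu (l : Multiset ℕ+) : ℂ := if l.Nodup then (-1 : ℂ) ^ (Multiset.card l) else 0

/-- The "integer" of a partition: the product of its parts. -/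
def nInt (l : Multiset ℕ+) : ℕ := (l.map (fun a => (a : ℕ))).prod

/-- Partition-theoretic phi function. -/
noncomputable def pphi (l : Multiset ℕ+) : ℂ :=
  (nInt l : ℂ) * ∏ a ∈ l.toFinset, (1 - (a : ℂ)⁻¹)

/-- Convert a `Nat.Partition n` to a multiset of positive integers. -/
def toPtn {n : ℕ} (p : n.Partition) : Multiset ℕ+ :=
  p.parts.pmap (fun x hx => ⟨x, hx⟩) (fun _ hx => p.parts_pos hx)

/-- The partition function `p(n)`. -/
def partcount (n : ℕ) : ℕ := Fintype.card (Nat.Partition n)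

/-- A partition lies in `P₌` iff it is nonempty with all parts equal. -/
def isPeq (l : Multiset ℕ+) : Prop :=
  ∃ (a : ℕ+) (k : ℕ), 0 < k ∧ l = Multiset.replicate k a

open Finset

lemma mem_pdivisors {l d : Multiset ℕ+} : d ∈ pdivisors l ↔ d ≤ l := by
  simp [pdivisors]

lemma filter_nodup_pdivisors (m : Multiset ℕ+) :
    (pdivisors m).filter Multiset.Nodup = m.toFinset.powerset.map ⟨Finset.val, val_injective⟩ := by
  ext γ
  simp only [mem_filter, mem_pdivisors, mem_map, mem_powerset, Function.Embedding.coeFn_mk]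
  constructor
  · rintro ⟨hle, hnd⟩
    exact ⟨⟨γ, hnd⟩, fun a ha => Multiset.mem_toFinset.mpr (Multiset.subset_of_le hle ha), rfl⟩
  · rintro ⟨s, hs, rfl⟩
    exact ⟨(Multiset.le_iff_subset s.nodup).mpr fun a ha => Multiset.mem_toFinset.mp (hs ha),
      s.nodup⟩

lemma sum_pdivisors_pmu (m : Multiset ℕ+) :
    ∑ γ ∈ pdivisors m, pmu γ = if m = 0 then 1 else 0 := by
  calc ∑ γ ∈ pdivisors m, pmu γ
      = ∑ γ ∈ (pdivisors m).filter Multiset.Nodup, (-1 : ℂ) ^ Multiset.card γ := by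
        rw [sum_filter]; rfl
    _ = ((∑ s ∈ m.toFinset.powerset, (-1 : ℤ) ^ #s : ℤ) : ℂ) := by
        rw [filter_nodup_pdivisors, sum_map]; push_cast; rfl
    _ = if m = 0 then 1 else 0 := by
        simp [sum_powerset_neg_one_pow_card, apply_ite]

lemma sum_pdivisors_sub_pmu {l δ : Multiset ℕ+} (h : δ ≤ l) :
    ∑ d ∈ (pdivisors l).filter (δ ≤ ·), pmu (d - δ) = if δ = l then 1 else 0 := by
  have : ∑ d ∈ (pdivisors l).filter (δ ≤ ·), pmu (d - δ) = ∑ γ ∈ pdivisors (l - δ), pmu γ := by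
    refine sum_nbij' (· - δ) (δ + ·) ?_ ?_ ?_ ?_ fun _ _ => rfl
    · intro d hd
      simp only [mem_filter, mem_pdivisors] at hd ⊢
      exact tsub_le_tsub_right hd.1 δ
    · intro γ hγ
      simp only [mem_filter, mem_pdivisors] at hγ ⊢
      exact ⟨le_tsub_iff_left h |>.mp hγ, le_self_add⟩
    · intro d hd
      simp only [mem_filter] at hd
      exact add_tsub_cancel_of_le hd.2
    · intro γ _
      exact add_tsub_cancel_left δ γ
  have hiff : l - δ = 0 ↔ δ = l :=
    tsub_eq_zero_iff_le.trans ⟨fun h' => le_antisymm h h', ge_of_eq⟩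
  rw [this, sum_pdivisors_pmu, if_congr hiff rfl rfl]

theorem sum_pdivisors_eq_of_eq_sum_mul_pmu (F f : Multiset ℕ+ → ℂ)
    (hf : ∀ l, f l = ∑ δ ∈ pdivisors l, F δ * pmu (l - δ)) (l : Multiset ℕ+) :
    ∑ d ∈ pdivisors l, f d = F l := by
  calc ∑ d ∈ pdivisors l, f d
      = ∑ d ∈ pdivisors l, ∑ δ ∈ pdivisors d, F δ * pmu (d - δ) := sum_congr rfl fun d _ => hf d
    _ = ∑ δ ∈ pdivisors l, ∑ d ∈ (pdivisors l).filter (δ ≤ ·), F δ * pmu (d - δ) := by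
        refine sum_comm' fun d δ => ?_
        simp only [mem_filter, mem_pdivisors]
        exact ⟨fun ⟨hd, hδ⟩ => ⟨⟨hd, hδ⟩, hδ.trans hd⟩, fun ⟨⟨hd, hδ⟩, _⟩ => ⟨hd, hδ⟩⟩
    _ = F l := by
        simp_rw [← mul_sum]
        rw [sum_eq_single_of_mem l (mem_pdivisors.mpr le_rfl)]
        · rw [sum_pdivisors_sub_pmu le_rfl, if_pos rfl, mul_one]
        · intro δ hδ hne
          rw [sum_pdivisors_sub_pmu (mem_pdivisors.mp hδ), if_neg hne, mul_zero]

def psize (l : Multiset ℕ+) : ℕ := (l.map PNat.val).sum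

lemma psize_add (a b : Multiset ℕ+) : psize (a + b) = psize a + psize b := by
  simp [psize]

lemma map_val_toPtn {n : ℕ} (p : n.Partition) : (toPtn p).map PNat.val = p.parts :=
  (Multiset.map_pmap (p := (0 < ·)) PNat.val (fun x hx => (⟨x, hx⟩ : ℕ+)) p.parts _).trans <|
    (Multiset.pmap_eq_map _ id _ _).trans (Multiset.map_id _)

lemma toPtn_injective (n : ℕ) : Function.Injective (toPtn (n := n)) := fun p q h =>
  Nat.Partition.ext <| by rw [← map_val_toPtn, h, map_val_toPtn]

def partitionsOf (n : ℕ) : Finset (Multiset ℕ+) := (univ : Finset n.Partition).image toPtn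

lemma mem_partitionsOf {n : ℕ} {l : Multiset ℕ+} : l ∈ partitionsOf n ↔ psize l = n := by
  constructor
  · rintro hl
    obtain ⟨p, -, rfl⟩ := mem_image.mp hl
    rw [psize, map_val_toPtn, p.parts_sum]
  · intro hl
    let p : n.Partition := ⟨l.map PNat.val, by simp, hl⟩
    refine mem_image.mpr ⟨p, mem_univ p, Multiset.map_injective PNat.coe_injective ?_⟩
    exact map_val_toPtn p

lemma card_partitionsOf (n : ℕ) : #(partitionsOf n) = partcount n := by
  rw [partitionsOf, card_image_of_injective _ (toPtn_injective n), card_univ, partcount]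

lemma sum_partition_eq_sum_partitionsOf (g : Multiset ℕ+ → ℂ) (n : ℕ) :
    ∑ p : n.Partition, g (toPtn p) = ∑ l ∈ partitionsOf n, g l :=
  (sum_image fun _ _ _ _ h => toPtn_injective n h).symm

lemma sum_partitionsOf_sum_pdivisors (g : Multiset ℕ+ → ℂ) (n : ℕ) :
    ∑ l ∈ partitionsOf n, ∑ d ∈ pdivisors l, g d
      = ∑ k ∈ range (n + 1), (∑ d ∈ partitionsOf k, g d) * (partcount (n - k) : ℂ) := by
  have hcount (k : ℕ) : (∑ d ∈ partitionsOf k, g d) * (partcount (n - k) : ℂ)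
      = ∑ x ∈ partitionsOf k ×ˢ partitionsOf (n - k), g x.1 := by
    rw [sum_product, sum_mul]
    simp [card_partitionsOf, mul_comm]
  simp_rw [hcount]
  rw [sum_sigma', sum_sigma']
  refine sum_nbij' (fun x => ⟨psize x.2, (x.2, x.1 - x.2)⟩) (fun y => ⟨y.2.1 + y.2.2, y.2.1⟩)
    ?_ ?_ ?_ ?_ fun _ _ => rfl
  · rintro ⟨l, d⟩ hy
    obtain ⟨hl, hdl⟩ : psize l = n ∧ d ≤ l := by
      simpa only [mem_sigma, mem_partitionsOf, mem_pdivisors] using hy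
    have hsplit : psize d + psize (l - d) = n := by
      rw [← psize_add, add_tsub_cancel_of_le hdl, hl]
    simp only [mem_sigma, mem_range, mem_product, mem_partitionsOf, true_and]
    omega
  · rintro ⟨k, d, e⟩ hx
    obtain ⟨hk, hd, he⟩ : k < n + 1 ∧ psize d = k ∧ psize e = n - k := by
      simpa only [mem_sigma, mem_range, mem_product, mem_partitionsOf] using hx
    simp only [mem_sigma, mem_partitionsOf, mem_pdivisors, psize_add, hd, he]
    exact ⟨by omega, le_self_add⟩
  · rintro ⟨l, d⟩ hy
    simp only [mem_sigma, mem_pdivisors] at hy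
    simp [add_tsub_cancel_of_le hy.2]
  · rintro ⟨k, d, e⟩ hx
    simp only [mem_sigma, mem_range, mem_product, mem_partitionsOf] at hx
    simp [hx.2.1]

/-- For arbitrary `F : P → ℂ`, with `f(λ) := ∑_{δ|λ} F(δ)·μ(λ/δ)`, we have
`⟨F⟩_q = ∑_{λ∈P} f(λ) q^{|λ|}`: in graded form, for every `n ≥ 0`,
`∑_{λ⊢n} F(λ) = ∑_{k=0}^{n} (∑_{δ⊢k} f(δ))·p(n−k)`. -/
theorem qbracket_coefficients (F f : Multiset ℕ+ → ℂ)
    (hf : ∀ l : Multiset ℕ+, f l = ∑ δ ∈ pdivisors l, F δ * pmu (l - δ)) (n : ℕ) :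
    (∑ p : n.Partition, F (toPtn p))
      = ∑ k ∈ Finset.range (n + 1),
          (∑ d : k.Partition, f (toPtn d)) * (partcount (n - k) : ℂ) := by
  simp only [sum_partition_eq_sum_partitionsOf]
  rw [← sum_partitionsOf_sum_pdivisors]
  exact sum_congr rfl fun l _ => (sum_pdivisors_eq_of_eq_sum_mul_pmu F f hf l).symm
end

section
/- Fix an integer a ≥ 0 and define S_a(λ) := ∑_{δ|λ, δ∈P₌} ℓ(δ)^a, the sum over partition divisors of λ lying in P₌. Then ⟨S_a⟩_q = ∑_{n≥1} σ_a(n) qⁿ, where σ_a(n) = ∑_{d|n} d^a is the classical divisor-power sum; equivalently, for every integer n ≥ 0, ∑_{λ⊢n} S_a(λ) = ∑_{k=1}^{n} σ_a(k) · p(n−k). -/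
/-!
A partition divisor in `P₌` is `m^k` with `k ≥ 1`, so `S_a(λ)` is the sum of `k^a` over the pairs
`(k, m)` of positive integers with `m^k ⊆ λ`. Summing over `λ ⊢ n` and exchanging the sums, each
pair with `km ≤ n` is counted once for every partition of `n - km` (remove `m^k` from `λ`), and
grouping the pairs by `j = km` gives `∑_{j ≤ n} σ_a(j) p(n - j)`.
-/

open Finset

open scoped Classical

lemma mul_le_sum_of_replicate_le {k m : ℕ} {s : Multiset ℕ} (h : Multiset.replicate k m ≤ s) :
    k * m ≤ s.sum := by
  obtain ⟨u, rfl⟩ := Multiset.le_iff_exists_add.1 h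
  simp

lemma toPtn_map_coe {n : ℕ} (p : n.Partition) : (toPtn p).map ((↑) : ℕ+ → ℕ) = p.parts :=
  (Multiset.map_pmap _ _ _ _).trans ((Multiset.pmap_eq_map _ _ _ _).trans p.parts.map_id)

lemma replicate_le_iff_replicate_coe_le {k : ℕ} {m : ℕ+} {l : Multiset ℕ+} :
    Multiset.replicate k m ≤ l ↔ Multiset.replicate k (m : ℕ) ≤ l.map ((↑) : ℕ+ → ℕ) := by
  rw [← Multiset.map_le_map_iff PNat.coe_injective, Multiset.map_replicate]

lemma filter_isPeq_pdivisors_eq_image (l : Multiset ℕ+) {N : ℕ}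
    (hN : (l.map ((↑) : ℕ+ → ℕ)).sum ≤ N) :
    (pdivisors l).filter isPeq =
      ((Icc 1 N ×ˢ Icc 1 N).filter
          (fun x => Multiset.replicate x.1 x.2 ≤ l.map ((↑) : ℕ+ → ℕ))).image
        (fun x => Multiset.replicate x.1 x.2.toPNat') := by
  ext δ
  simp only [pdivisors, isPeq, mem_filter, Multiset.mem_toFinset, Multiset.mem_powerset,
    mem_image, mem_product, mem_Icc, Prod.exists]
  constructor
  · rintro ⟨hδ, m, k, hk, rfl⟩
    have hkm := (mul_le_sum_of_replicate_le (replicate_le_iff_replicate_coe_le.1 hδ)).trans hN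
    have hm := m.pos
    refine ⟨k, m, ⟨⟨⟨hk, ?_⟩, hm, ?_⟩, replicate_le_iff_replicate_coe_le.1 hδ⟩, by simp⟩ <;>
      nlinarith
  · rintro ⟨k, m, ⟨⟨⟨hk, -⟩, hm, -⟩, hle⟩, rfl⟩
    refine ⟨replicate_le_iff_replicate_coe_le.2 ?_, m.toPNat', k, hk, rfl⟩
    rwa [PNat.toPNat'_coe hm]

lemma sum_pdivisors_isPeq {M : Type*} [AddCommMonoid M] (l : Multiset ℕ+) {N : ℕ}
    (hN : (l.map ((↑) : ℕ+ → ℕ)).sum ≤ N) (f : ℕ → M) :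
    ∑ δ ∈ pdivisors l, (if isPeq δ then f (Multiset.card δ) else 0) =
      ∑ x ∈ Icc 1 N ×ˢ Icc 1 N,
        if Multiset.replicate x.1 x.2 ≤ l.map ((↑) : ℕ+ → ℕ) then f x.1 else 0 := by
  rw [← sum_filter, ← sum_filter, filter_isPeq_pdivisors_eq_image l hN, sum_image]
  · simp
  · rintro ⟨k, m⟩ hx ⟨k', m'⟩ hx' h
    simp only [coe_filter, mem_product, mem_Icc, Set.mem_ofPred_eq] at hx hx' h
    obtain rfl : k = k' := by simpa using congrArg Multiset.card h
    have hmm' := congrArg PNat.val <|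
      Multiset.eq_of_mem_replicate (h ▸ Multiset.mem_replicate.2 ⟨by omega, rfl⟩)
    rw [PNat.toPNat'_coe hx.1.2.1, PNat.toPNat'_coe hx'.1.2.1] at hmm'
    rw [hmm']

def partitionAddReplicateEquiv {n k m : ℕ} (hm : 0 < m) (hkm : k * m ≤ n) :
    (n - k * m).Partition ≃ {p : n.Partition // Multiset.replicate k m ≤ p.parts} where
  toFun q := ⟨⟨q.parts + Multiset.replicate k m,
      by grind [q.parts_pos, Multiset.eq_of_mem_replicate],
      by simp [q.parts_sum, hkm]⟩,
    Multiset.le_add_left _ _⟩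
  invFun p := ⟨p.1.parts - Multiset.replicate k m,
      fun hi => p.1.parts_pos (Multiset.mem_of_le tsub_le_self hi),
      by
        have := congrArg Multiset.sum (tsub_add_cancel_of_le p.2)
        rw [Multiset.sum_add, Multiset.sum_replicate, smul_eq_mul, p.1.parts_sum] at this
        omega⟩
  left_inv q := Nat.Partition.ext (add_tsub_cancel_right _ _)
  right_inv p := Subtype.ext <| Nat.Partition.ext (tsub_add_cancel_of_le p.2)

lemma card_filter_replicate_le_parts (n : ℕ) {k m : ℕ} (hm : 0 < m) :
    #{p : n.Partition | Multiset.replicate k m ≤ p.parts} =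
      if k * m ≤ n then partcount (n - k * m) else 0 := by
  split_ifs with hkm
  · rw [← Fintype.card_subtype, ← Fintype.card_congr (partitionAddReplicateEquiv hm hkm)]
    rfl
  · rw [card_eq_zero, filter_eq_empty_iff]
    intro p _ hp
    exact hkm (p.parts_sum ▸ mul_le_sum_of_replicate_le hp)

lemma sum_mul_le_eq_sum_divisors {M : Type*} [AddCommMonoid M] (n : ℕ) (g : ℕ → ℕ → M) :
    ∑ x ∈ Icc 1 n ×ˢ Icc 1 n, (if x.1 * x.2 ≤ n then g x.1 (x.1 * x.2) else 0) =
      ∑ j ∈ Icc 1 n, ∑ d ∈ j.divisors, g d j := by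
  have hpairs : ∀ j x, j ∈ Icc 1 n ∧ x ∈ j.divisorsAntidiagonal ↔
      j ∈ ({x.1 * x.2} : Finset ℕ) ∧ x ∈ (Icc 1 n ×ˢ Icc 1 n).filter (fun x => x.1 * x.2 ≤ n) := by
    rintro j ⟨d, m⟩
    simp only [mem_Icc, Nat.mem_divisorsAntidiagonal, mem_singleton, mem_filter, mem_product]
    constructor
    · rintro ⟨⟨hj, hjn⟩, rfl, -⟩
      have hd := Nat.pos_of_mul_pos_right hj
      have hm := Nat.pos_of_mul_pos_left hj
      refine ⟨rfl, ⟨⟨hd, ?_⟩, hm, ?_⟩, hjn⟩ <;> nlinarith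
    · rintro ⟨rfl, ⟨⟨hd, -⟩, hm, -⟩, hdm⟩
      exact ⟨⟨Nat.one_le_iff_ne_zero.2 (by positivity), hdm⟩, rfl, by positivity⟩
  calc ∑ x ∈ Icc 1 n ×ˢ Icc 1 n, (if x.1 * x.2 ≤ n then g x.1 (x.1 * x.2) else 0)
      = ∑ x ∈ (Icc 1 n ×ˢ Icc 1 n).filter (fun x => x.1 * x.2 ≤ n),
          ∑ j ∈ {x.1 * x.2}, g x.1 j := by
        simp only [sum_filter, sum_singleton]
    _ = ∑ j ∈ Icc 1 n, ∑ x ∈ j.divisorsAntidiagonal, g x.1 j := (sum_comm' hpairs).symm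
    _ = ∑ j ∈ Icc 1 n, ∑ d ∈ j.divisors, g d j :=
        sum_congr rfl fun j _ => Nat.sum_divisorsAntidiagonal (fun d _ => g d j)

/-- With `S_a(λ) := ∑_{δ|λ, δ∈P₌} ℓ(δ)^a`, we have `⟨S_a⟩_q = ∑_{n≥1} σ_a(n) qⁿ`: in
graded form, for every `n ≥ 0`, `∑_{λ⊢n} S_a(λ) = ∑_{k=1}^{n} σ_a(k)·p(n−k)`. -/
theorem qbracket_S_a (a : ℕ) (n : ℕ) :
    (∑ p : n.Partition, ∑ δ ∈ pdivisors (toPtn p),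
        if isPeq δ then (Multiset.card δ) ^ a else 0)
      = ∑ k ∈ Finset.Icc 1 n, (∑ d ∈ k.divisors, d ^ a) * partcount (n - k) := by
  calc _ = ∑ p : n.Partition, ∑ x ∈ Icc 1 n ×ˢ Icc 1 n,
          if Multiset.replicate x.1 x.2 ≤ p.parts then x.1 ^ a else 0 :=
        sum_congr rfl fun p _ => by
          simpa only [toPtn_map_coe] using sum_pdivisors_isPeq (toPtn p)
            (by rw [toPtn_map_coe, p.parts_sum]) (· ^ a)
    _ = ∑ x ∈ Icc 1 n ×ˢ Icc 1 n,
          if x.1 * x.2 ≤ n then x.1 ^ a * partcount (n - x.1 * x.2) else 0 := by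
        rw [sum_comm]
        refine sum_congr rfl fun x hx => ?_
        have hm : 0 < x.2 := (mem_Icc.1 (mem_product.1 hx).2).1
        rw [← sum_filter, sum_const, card_filter_replicate_le_parts n hm, smul_eq_mul]
        split_ifs <;> simp only [mul_comm, mul_zero]
    _ = ∑ j ∈ Icc 1 n, ∑ d ∈ j.divisors, d ^ a * partcount (n - j) :=
        sum_mul_le_eq_sum_divisors n (fun d j => d ^ a * partcount (n - j))
    _ = _ := by simp only [sum_mul]
end
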